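/- Conversely, for the bottom-up parser of a deterministic regular tree grammar: if the parser on input tree x succeeds and returns a pair (A, r̄), then r̄ generates x from A; in particular x ∈ L(G|A). -/

import Mathlib

structure Rule (N : Type) (α : Type) where
  lhs : N
  sym : α
  rhs : List N
deriving DecidableEq

inductive RTree (α : Type) where
  | node : α → List (RTree α) → RTree α

def RTree.size {α : Type} : RTree α → Nat
  | .node _ ys => 1 + (ys.attach.map (fun y => RTree.size y.1)).sum
decreasing_by have := List.sizeOf_lt_of_mem y.2; simp only [RTree.node.sizeOf_spec]; omega

def RTree.children {α : Type} : RTree α → List (RTree α)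
  | .node _ ys => ys

def RTree.root {α : Type} : RTree α → α
  | .node x _ => x

def RTree.dfs {α : Type} : RTree α → List (RTree α)
  | .node x ys => (ys.attach.map (fun y => RTree.dfs y.1)).flatten ++ [.node x ys]
decreasing_by have := List.sizeOf_lt_of_mem y.2; simp only [RTree.node.sizeOf_spec]; omega

inductive GenList {N α : Type} (R : Set (Rule N α)) :
    List (Rule N α) → List N → List (RTree α) → Prop where
  | nil : GenList R [] [] []
  | step {r : Rule N α} {rs : List (Rule N α)} {stack : List N}
      {ys ts : List (RTree α)} :
      r ∈ R →
      ys.length = r.rhs.length →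
      GenList R rs (r.rhs ++ stack) (ys ++ ts) →
      GenList R (r :: rs) (r.lhs :: stack) (RTree.node r.sym ys :: ts)

def GenSeq {N α : Type} (R : Set (Rule N α)) (rs : List (Rule N α))
    (A : N) (t : RTree α) : Prop :=
  GenList R rs [A] [t]

def Lang {N α : Type} (R : Set (Rule N α)) (A : N) : Set (RTree α) :=
  {t | ∃ rs, GenSeq R rs A t}

def LangN {N α : Type} (R : Set (Rule N α)) (A : N) (n : Nat) : Set (RTree α) :=
  {t ∈ Lang R A | t.size ≤ n}

def Deterministic {N α : Type} (R : Set (Rule N α)) : Prop :=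
  ∀ r ∈ R, ∀ r' ∈ R, r.sym = r'.sym → r.rhs = r'.rhs → r = r'

def parse {N α : Type} [DecidableEq N] [DecidableEq α] (R : List (Rule N α)) :
    RTree α → Option (N × List (Rule N α))
  | RTree.node x ys => do
    let res ← ys.attach.mapM (fun y => parse R y.1)
    match R.find? (fun r => r.sym == x && r.rhs == res.map Prod.fst) with
    | some r => some (r.lhs, r :: (res.map Prod.snd).flatten)
    | none => none
decreasing_by have := List.sizeOf_lt_of_mem y.2; simp only [RTree.node.sizeOf_spec]; omega

/-!
Proof idea: by well-founded recursion on the tree. If `parse` succeeds on `x(y₁,…,y_k)`, it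
succeeded on every child, giving derivations `Bᵢ ⇒ yᵢ` by the sequences `r̄ᵢ`. Since the stack
machine works on the leftmost symbol only, these derivations run one after the other on the stack
`B₁ ⋯ B_k`, so `r̄₁ ⋯ r̄_k` derives `y₁ ⋯ y_k` from it; prefixing the rule `A → x(B₁,…,B_k)` found by
`parse` yields a derivation of `x(y₁,…,y_k)` from `A`.
-/

namespace GenList

variable {N α : Type} {S : Set (Rule N α)}

theorem append {rs rs' : List (Rule N α)} {as bs : List N} {ts us : List (RTree α)}
    (h : GenList S rs as ts) (h' : GenList S rs' bs us) :
    GenList S (rs ++ rs') (as ++ bs) (ts ++ us) := by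
  induction h with
  | nil => simpa using h'
  | step hr hlen _ ih =>
    simp only [List.cons_append]
    exact .step hr hlen (by simpa only [List.append_assoc] using ih)

theorem length_eq {rs : List (Rule N α)} {as : List N} {ts : List (RTree α)}
    (h : GenList S rs as ts) : as.length = ts.length := by
  induction h with
  | nil => rfl
  | step _ hlen _ ih =>
    simp only [List.length_cons, List.length_append] at ih ⊢
    omega

theorem of_mapM {β : Type} {f : β → Option (N × List (Rule N α))} {g : β → RTree α}
    {l : List β} {res : List (N × List (Rule N α))}
    (hf : ∀ b ∈ l, ∀ A rs, f b = some (A, rs) → GenList S rs [A] [g b])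
    (h : l.mapM f = some res) :
    GenList S (res.map Prod.snd).flatten (res.map Prod.fst) (l.map g) := by
  induction l generalizing res with
  | nil =>
    obtain rfl : res = [] := by simpa using h.symm
    exact .nil
  | cons b l ih =>
    simp only [List.mapM_cons, Option.pure_def, Option.bind_eq_bind,
      Option.bind_eq_some_iff, Option.some.injEq] at h
    obtain ⟨⟨A, rs⟩, hb, res', hl, rfl⟩ := h
    have hhead := hf b List.mem_cons_self A rs hb
    have htail := ih (fun b' hb' => hf b' (List.mem_cons_of_mem b hb')) hl
    simpa using hhead.append htail

end GenList

theorem parse_node_eq_some {N α : Type} [DecidableEq N] [DecidableEq α]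
    {R : List (Rule N α)} {x : α} {ys : List (RTree α)} {A : N} {rs : List (Rule N α)}
    (h : parse R (.node x ys) = some (A, rs)) :
    ∃ res r, ys.attach.mapM (fun y => parse R y.1) = some res ∧ r ∈ R ∧ r.sym = x ∧
      r.rhs = res.map Prod.fst ∧ A = r.lhs ∧ rs = r :: (res.map Prod.snd).flatten := by
  rw [parse] at h
  simp only [Option.bind_eq_bind, Option.bind_eq_some_iff] at h
  obtain ⟨res, hres, h⟩ := h
  cases hfind : R.find? (fun r => r.sym == x && r.rhs == res.map Prod.fst) with
  | none => simp [hfind] at h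
  | some r =>
    simp only [hfind, Option.some.injEq, Prod.mk.injEq] at h
    have hpred := List.find?_some hfind
    simp only [Bool.and_eq_true, beq_iff_eq] at hpred
    exact ⟨res, r, hres, List.mem_of_find?_eq_some hfind, hpred.1, hpred.2, h.1.symm, h.2.symm⟩

theorem parse_sound {N α : Type} [DecidableEq N] [DecidableEq α] (R : List (Rule N α)) :
    ∀ (t : RTree α) (A : N) (rs : List (Rule N α)),
      parse R t = some (A, rs) → GenSeq {r | r ∈ R} rs A t
  | .node x ys, A, rs, h => by
    obtain ⟨res, r, hres, hrR, rfl, hrhs, rfl, rfl⟩ := parse_node_eq_some h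
    have hchildren : GenList {r | r ∈ R} (res.map Prod.snd).flatten r.rhs ys := by
      rw [hrhs, ← List.attach_map_subtype_val ys]
      exact GenList.of_mapM (fun y _ => parse_sound R y.1) hres
    have hlen : ys.length = r.rhs.length := hchildren.length_eq.symm
    exact .step hrR hlen (by simpa using hchildren)
decreasing_by have := List.sizeOf_lt_of_mem y.2; simp only [RTree.node.sizeOf_spec]; omega

theorem stmt6_general {N alpha : Type} [DecidableEq N] [DecidableEq alpha]
    (R : List (Rule N alpha))
    (t : RTree alpha) (A : N) (rs : List (Rule N alpha))
    (h : parse R t = some (A, rs)) :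
    GenSeq {r | r ∈ R} rs A t ∧ t ∈ Lang {r | r ∈ R} A :=
  ⟨parse_sound R t A rs h, rs, parse_sound R t A rs h⟩

theorem stmt6 {N alpha : Type} [DecidableEq N] [DecidableEq alpha]
    (R : List (Rule N alpha)) (hdet : Deterministic {r | r ∈ R})
    (t : RTree alpha) (A : N) (rs : List (Rule N alpha))
    (h : parse R t = some (A, rs)) :
    GenSeq {r | r ∈ R} rs A t ∧ t ∈ Lang {r | r ∈ R} A :=
  stmt6_general R t A rs h
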